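/- Let d : C → C be a nonzero Λ-linear map. Then both infima — the infimum of A(ȳ) − A(x̄) over all pairs of capped orbits x̄, ȳ with ⟨d x̄, ȳ⟩ = 1, and the infimum of A(d ξ) − A(ξ) over all ξ ∈ C with d ξ ≠ 0 — are attained, i.e. each of these two sets of real numbers has a minimum. -/

import Mathlib

/-!  Common setup: `Λ := LaurentSeries (ZMod 2)`, `C := Fin n → Λ`, the action
functional `A`, orthogonality, capped orbits, the pairing `⟨d x̄, ȳ⟩`,
Floer-type differentials and singular decompositions. -/

noncomputable section

/-- The Novikov field `Λ = 𝔽₂((q))`, realized as formal Laurent series over `ZMod 2`. -/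
abbrev Lam : Type := LaurentSeries (ZMod 2)

open Classical in
/-- The action `A : C → ℝ ∪ {+∞}`: `A 0 = ⊤` and for `ξ ≠ 0`,
`A ξ = min { a i + λ₀ • ord (ξ i) | ξ i ≠ 0 }`. -/
def actA (n : ℕ) (lam0 : ℝ) (a : Fin n → ℝ) (xi : Fin n → Lam) : WithTop ℝ :=
  Finset.univ.inf fun i : Fin n =>
    if xi i = 0 then (⊤ : WithTop ℝ)
    else ((a i + lam0 * ((xi i).order : ℝ) : ℝ) : WithTop ℝ)

/-- A finite family `(ξ j)` of vectors of `C` is orthogonal if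
`A (∑ λ_j • ξ_j) = min_j A (λ_j • ξ_j)` for all coefficients `λ_j ∈ Λ`. -/
def IsOrthogonalFamily (n : ℕ) (lam0 : ℝ) (a : Fin n → ℝ) {ι : Type} [Fintype ι]
    (xi : ι → (Fin n → Lam)) : Prop :=
  ∀ c : ι → Lam,
    actA n lam0 a (∑ j, c j • xi j) = Finset.univ.inf fun j => actA n lam0 a (c j • xi j)

/-- The capped orbit `q^k eᵢ`. -/
def cappedOrbit (n : ℕ) (i : Fin n) (k : ℤ) : Fin n → Lam :=
  Pi.single i (HahnSeries.single k 1)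

/-- `⟨d x̄, ȳ⟩ ∈ 𝔽₂` for `x̄ = q^k eᵢ` and `ȳ = q^l eⱼ`: the `(l - k)`-th Laurent
coefficient of the `j`-th component of `d eᵢ`. -/
def pairing (n : ℕ) (d : (Fin n → Lam) →ₗ[Lam] (Fin n → Lam)) (i j : Fin n) (k l : ℤ) :
    ZMod 2 :=
  ((d (Pi.single i 1)) j).coeff (l - k)

/-- The set of arrow lengths `A ȳ - A x̄` over pairs of capped orbits with `⟨d x̄, ȳ⟩ = 1`. -/
def arrowLengths (n : ℕ) (lam0 : ℝ) (a : Fin n → ℝ)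
    (d : (Fin n → Lam) →ₗ[Lam] (Fin n → Lam)) : Set ℝ :=
  {t : ℝ | ∃ (i j : Fin n) (k l : ℤ),
    pairing n d i j k l = 1 ∧ t = (a j + lam0 * l) - (a i + lam0 * k)}

/-- The set of values `A (d ξ) - A ξ` over `ξ ∈ C` with `d ξ ≠ 0`. -/
def actionGaps (n : ℕ) (lam0 : ℝ) (a : Fin n → ℝ)
    (d : (Fin n → Lam) →ₗ[Lam] (Fin n → Lam)) : Set ℝ :=
  {t : ℝ | ∃ xi : Fin n → Lam, d xi ≠ 0 ∧
    actA n lam0 a (d xi) = actA n lam0 a xi + (t : WithTop ℝ)}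

/-- A Floer-type differential on `C`: a `Λ`-linear map squaring to zero that strictly
increases the action. -/
def IsFloerDifferential (n : ℕ) (lam0 : ℝ) (a : Fin n → ℝ)
    (d : (Fin n → Lam) →ₗ[Lam] (Fin n → Lam)) : Prop :=
  d ∘ₗ d = 0 ∧
    ∀ xi : Fin n → Lam, xi ≠ 0 → d xi ≠ 0 → actA n lam0 a xi < actA n lam0 a (d xi)

/-- A singular decomposition of `(C, d)`: `p + 2r = n` and an orthogonal basis
`α₁,…,α_p, η₁,…,η_r, γ₁,…,γ_r` of `C` over `Λ` with `d αᵢ = 0` and `d ηⱼ = γⱼ`. -/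
def IsSingularDecomposition (n : ℕ) (lam0 : ℝ) (a : Fin n → ℝ)
    (d : (Fin n → Lam) →ₗ[Lam] (Fin n → Lam)) (p r : ℕ)
    (alpha : Fin p → (Fin n → Lam)) (eta gamma : Fin r → (Fin n → Lam)) : Prop :=
  p + 2 * r = n ∧
  IsOrthogonalFamily n lam0 a (Sum.elim alpha (Sum.elim eta gamma)) ∧
  LinearIndependent Lam (Sum.elim alpha (Sum.elim eta gamma)) ∧
  Submodule.span Lam (Set.range (Sum.elim alpha (Sum.elim eta gamma))) = ⊤ ∧
  (∀ i, d (alpha i) = 0) ∧ (∀ j, d (eta j) = gamma j)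

/-- The set of bars `A (γ j) - A (η j)` of a singular decomposition; its infimum is the
minimal bar `β_min` when `r ≥ 1`. -/
def barSet (n : ℕ) (lam0 : ℝ) (a : Fin n → ℝ) {r : ℕ}
    (eta gamma : Fin r → (Fin n → Lam)) : Set ℝ :=
  {t : ℝ | ∃ j : Fin r, actA n lam0 a (gamma j) = actA n lam0 a (eta j) + (t : WithTop ℝ)}

end

/-! The arrows out of `eᵢ` are the monomials of the entries `(d eᵢ) j`. Only finitely many entries
are nonzero and each has a lowest-order term, so the arrow lengths have a least element `m`.
Every monomial of `(d ξ) j` is the product of a monomial of some `ξ i` with an arrow out of `eᵢ`,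
whence `A ξ + m ≤ A (d ξ)` for all `ξ`; equality holds at the basis vector `eᵢ` carrying a
shortest arrow. -/

theorem HahnSeries.exists_coeff_ne_zero_of_coeff_mul_ne_zero {Γ R : Type*} [AddCommMonoid Γ]
    [PartialOrder Γ] [IsOrderedCancelAddMonoid Γ] [NonUnitalNonAssocSemiring R]
    {x y : HahnSeries Γ R} {l : Γ} (h : (x * y).coeff l ≠ 0) :
    ∃ k₁ k₂, x.coeff k₁ ≠ 0 ∧ y.coeff k₂ ≠ 0 ∧ k₁ + k₂ = l := by
  obtain ⟨k₁, hk₁, k₂, hk₂, rfl⟩ := HahnSeries.support_mul_subset h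
  exact ⟨k₁, k₂, hk₁, hk₂, rfl⟩

theorem LinearMap.apply_eq_sum_mul_apply_single {ι R : Type*} [Fintype ι] [DecidableEq ι]
    [CommSemiring R] (f : (ι → R) →ₗ[R] ι → R) (x : ι → R) (j : ι) :
    f x j = ∑ i, x i * f (Pi.single i 1) j := by
  rw [f.pi_apply_eq_sum_univ x, Finset.sum_apply]
  refine Finset.sum_congr rfl fun i _ => ?_
  simp_rw [eq_comm (a := i), ← Pi.single_apply, Pi.smul_apply, smul_eq_mul]

theorem LinearMap.exists_apply_single_ne_zero {ι R : Type*} [Finite ι] [DecidableEq ι]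
    [CommSemiring R] {f : (ι → R) →ₗ[R] ι → R} (hf : f ≠ 0) :
    ∃ i j, f (Pi.single i 1) j ≠ 0 := by
  contrapose! hf
  ext i j
  exact hf i j

theorem ZMod.eq_one_of_ne_zero_two {x : ZMod 2} (h : x ≠ 0) : x = 1 := by
  revert x; decide

section Action

variable {n : ℕ} {lam0 : ℝ} {a : Fin n → ℝ}

theorem actA_le_of_apply_ne_zero {ξ : Fin n → Lam} {i : Fin n} (h : ξ i ≠ 0) :
    actA n lam0 a ξ ≤ ↑(a i + lam0 * (ξ i).order) := by
  classical
  refine (Finset.inf_le (Finset.mem_univ i)).trans ?_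
  simp [h]

theorem le_actA {ξ : Fin n → Lam} {c : WithTop ℝ}
    (h : ∀ i, ξ i ≠ 0 → c ≤ ↑(a i + lam0 * (ξ i).order)) : c ≤ actA n lam0 a ξ := by
  refine Finset.le_inf fun i _ => ?_
  split_ifs with hi
  · exact le_top
  · exact h i hi

theorem actA_ne_top {ξ : Fin n → Lam} (hξ : ξ ≠ 0) : actA n lam0 a ξ ≠ ⊤ := by
  obtain ⟨i, hi⟩ := Function.ne_iff.mp hξ
  exact ne_top_of_le_ne_top WithTop.coe_ne_top (actA_le_of_apply_ne_zero hi)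

theorem actA_single_one (i : Fin n) : actA n lam0 a (Pi.single i 1) = a i := by
  apply le_antisymm
  · simpa using actA_le_of_apply_ne_zero (lam0 := lam0) (a := a) (ξ := Pi.single i 1) (i := i)
  · refine le_actA fun i' hi' => ?_
    obtain rfl : i' = i := by contrapose! hi'; exact Pi.single_eq_of_ne hi' 1
    simp

end Action

section Arrows

variable {n : ℕ} {lam0 : ℝ} {a : Fin n → ℝ} {d : (Fin n → Lam) →ₗ[Lam] (Fin n → Lam)}

theorem mem_arrowLengths_of_coeff_ne_zero {i j : Fin n} {k : ℤ}
    (h : (d (Pi.single i 1) j).coeff k ≠ 0) : a j - a i + lam0 * k ∈ arrowLengths n lam0 a d :=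
  ⟨i, j, 0, k, ZMod.eq_one_of_ne_zero_two (by simpa [pairing] using h), by ring⟩

theorem actA_add_le_actA_apply (hlam0 : 0 ≤ lam0) {m : ℝ}
    (hm : m ∈ lowerBounds (arrowLengths n lam0 a d)) (ξ : Fin n → Lam) :
    actA n lam0 a ξ + m ≤ actA n lam0 a (d ξ) := by
  classical
  refine le_actA fun j hj => ?_
  set l := (d ξ j).order
  have hco : (d ξ j).coeff l ≠ 0 := HahnSeries.coeff_order_eq_zero.not.2 hj
  rw [d.apply_eq_sum_mul_apply_single, HahnSeries.coeff_sum] at hco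
  obtain ⟨i, -, hi⟩ := Finset.exists_ne_zero_of_sum_ne_zero hco
  obtain ⟨k₁, k₂, hk₁, hk₂, hk⟩ := HahnSeries.exists_coeff_ne_zero_of_coeff_mul_ne_zero hi
  have hξi : ξ i ≠ 0 := by rintro h; simp [h] at hk₁
  have hord : lam0 * (ξ i).order ≤ lam0 * k₁ := by
    gcongr; exact_mod_cast HahnSeries.order_le_of_coeff_ne_zero hk₁
  have harrow := hm (mem_arrowLengths_of_coeff_ne_zero hk₂)
  calc actA n lam0 a ξ + m ≤ ↑(a i + lam0 * (ξ i).order) + ↑m := by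
        gcongr; exact actA_le_of_apply_ne_zero hξi
    _ ≤ ↑(a j + lam0 * l) := by
        rw [← WithTop.coe_add, WithTop.coe_le_coe, ← hk]
        push_cast
        linarith

theorem lowerBounds_arrowLengths_subset (hlam0 : 0 ≤ lam0) :
    lowerBounds (arrowLengths n lam0 a d) ⊆ lowerBounds (actionGaps n lam0 a d) := by
  rintro m hm t ⟨ξ, hdξ, heq⟩
  have hξ : ξ ≠ 0 := by rintro rfl; simp at hdξ
  have := actA_add_le_actA_apply hlam0 hm ξ
  rwa [heq, WithTop.add_le_add_iff_left (actA_ne_top hξ), WithTop.coe_le_coe] at this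

theorem exists_isLeast_arrowLengths (hlam0 : 0 ≤ lam0) (hd : d ≠ 0) :
    ∃ i j, d (Pi.single i 1) j ≠ 0 ∧
      IsLeast (arrowLengths n lam0 a d) (a j - a i + lam0 * (d (Pi.single i 1) j).order) := by
  classical
  obtain ⟨i₀, j₀, h₀⟩ := d.exists_apply_single_ne_zero hd
  obtain ⟨⟨i, j⟩, hij, hmin⟩ :=
    (Finset.univ.filter fun p : Fin n × Fin n => d (Pi.single p.1 1) p.2 ≠ 0).exists_min_image
      (fun p => a p.2 - a p.1 + lam0 * (d (Pi.single p.1 1) p.2).order)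
      ⟨(i₀, j₀), by simpa using h₀⟩
  simp only [Finset.mem_filter, Finset.mem_univ, true_and] at hij hmin
  refine ⟨i, j, hij, mem_arrowLengths_of_coeff_ne_zero (HahnSeries.coeff_order_eq_zero.not.2 hij),
    ?_⟩
  rintro t ⟨i', j', k, l, hpair, rfl⟩
  have hco : (d (Pi.single i' 1) j').coeff (l - k) ≠ 0 := by
    simp only [pairing] at hpair
    simp [hpair]
  have hord : lam0 * (d (Pi.single i' 1) j').order ≤ lam0 * (l - k : ℤ) := by
    gcongr; exact_mod_cast HahnSeries.order_le_of_coeff_ne_zero hco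
  have := hmin (i', j') (by rintro h; simp [h] at hco)
  push_cast at hord this
  linarith

theorem mem_actionGaps_of_mem_lowerBounds (hlam0 : 0 ≤ lam0) {i j : Fin n}
    (hij : d (Pi.single i 1) j ≠ 0)
    (hm : a j - a i + lam0 * (d (Pi.single i 1) j).order ∈ lowerBounds (arrowLengths n lam0 a d)) :
    a j - a i + lam0 * (d (Pi.single i 1) j).order ∈ actionGaps n lam0 a d := by
  refine ⟨Pi.single i 1, fun h => hij (by rw [h, Pi.zero_apply]), ?_⟩
  apply le_antisymm
  · rw [actA_single_one, ← WithTop.coe_add]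
    convert actA_le_of_apply_ne_zero hij using 2
    ring
  · simpa [actA_single_one] using actA_add_le_actA_apply hlam0 hm (Pi.single i 1)

end Arrows

/-- For a nonzero `Λ`-linear map `d : C → C`, both infima — that of
`A ȳ - A x̄` over pairs of capped orbits with `⟨d x̄, ȳ⟩ = 1`, and that of
`A (d ξ) - A ξ` over `ξ` with `d ξ ≠ 0` — are attained. -/
theorem arrowLengths_actionGaps_attained (n : ℕ) (lam0 : ℝ) (hlam0 : 0 < lam0)
    (a : Fin n → ℝ) (d : (Fin n → Lam) →ₗ[Lam] (Fin n → Lam)) (hd : d ≠ 0) :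
    (∃ m : ℝ, IsLeast (arrowLengths n lam0 a d) m) ∧
    (∃ m : ℝ, IsLeast (actionGaps n lam0 a d) m) := by
  obtain ⟨i, j, hij, hleast⟩ := exists_isLeast_arrowLengths (a := a) hlam0.le hd
  exact ⟨⟨_, hleast⟩, _, mem_actionGaps_of_mem_lowerBounds hlam0.le hij hleast.2,
    lowerBounds_arrowLengths_subset hlam0.le hleast.2⟩
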